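/- arXiv:1709.07999 — 2 statements merged into one kernel-verified Lean document; each statement's English description precedes it below -/
import Mathlib

section
/- For all 0 ≤ k ≤ n, the horizontal recurrence W_{m,r,q}(n,k) = ∑_{j=0}^{n-k} (-1)^j q^{C(k,2) - C(k+j+1,2)} (∏_{i=k+1}^{k+j} (m[i]_q + r)) W_{m,r,q}(n+1, k+j+1) holds, assuming m[i]_q + r ≠ 0 for all relevant i. -/
/-! Substituting the vertical recurrence for `W(n+1, k+j+1)` turns the `j`-th summand into
`f j - f (j+1)` with `f j = (-1)^j q^(C(k,2) - C(k+j,2)) (∏_{i=k+1}^{k+j} a i) W(n, k+j)`, since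
`C(k+j+1,2) = C(k+j,2) + k + j`. The sum therefore telescopes to `f 0 = W(n,k)`, the last term
vanishing because `W(n, k') = 0` for `k' > n`. -/

open Finset

noncomputable def qint (q : ℂ) (n : ℕ) : ℂ := (q ^ n - 1) / (q - 1)

/-- (q,r)-Whitney numbers of the first kind, via the triangular recurrence
`w(n+1,k) = q^{-n} (w(n,k-1) - (m[n]_q + r) w(n,k))`, with `w(0,0)=1` and
`w(n,k)=0` for `k>n` (the `k<0` values are zero, absorbed in the `k=0` case). -/
noncomputable def qw (q m r : ℂ) : ℕ → ℕ → ℂ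
  | 0, 0 => 1
  | 0, _ + 1 => 0
  | n + 1, 0 => q ^ (-(n : ℤ)) * (0 - (m * qint q n + r) * qw q m r n 0)
  | n + 1, k + 1 => q ^ (-(n : ℤ)) * (qw q m r n k - (m * qint q n + r) * qw q m r n (k + 1))

/-- (q,r)-Whitney numbers of the second kind, via
`W(n+1,k) = q^{k-1} W(n,k-1) + (m[k]_q + r) W(n,k)`, with `W(0,0)=1`. -/
noncomputable def qW (q m r : ℂ) : ℕ → ℕ → ℂ
  | 0, 0 => 1
  | 0, _ + 1 => 0
  | n + 1, 0 => (m * qint q 0 + r) * qW q m r n 0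
  | n + 1, k + 1 => q ^ k * qW q m r n k + (m * qint q (k + 1) + r) * qW q m r n (k + 1)


lemma qW_eq_zero_of_lt (q m r : ℂ) {n k : ℕ} (h : n < k) : qW q m r n k = 0 := by
  induction n generalizing k with
  | zero =>
    obtain ⟨k, rfl⟩ := Nat.exists_eq_add_one_of_ne_zero h.ne'
    rfl
  | succ n ih =>
    obtain ⟨k, rfl⟩ := Nat.exists_eq_add_one_of_ne_zero (by omega : k ≠ 0)
    rw [qW, ih (by omega), ih (by omega), mul_zero, mul_zero, add_zero]

lemma zpow_sub_choose_two_succ_mul {K : Type*} [GroupWithZero K] {q : K} (hq : q ≠ 0)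
    (c : ℤ) (m : ℕ) : q ^ (c - ((m + 1).choose 2 : ℤ)) * q ^ m = q ^ (c - (m.choose 2 : ℤ)) := by
  rw [← zpow_natCast q m, ← zpow_add₀ hq, Nat.choose_succ_succ', Nat.choose_one_right]
  push_cast
  ring_nf

theorem horizontal_recurrence {K : Type*} [Field K] {q : K} (hq : q ≠ 0) (a : ℕ → K)
    (W : ℕ → ℕ → K) (hW : ∀ n k, W (n + 1) (k + 1) = q ^ k * W n k + a (k + 1) * W n (k + 1))
    (hW_zero : ∀ n k, n < k → W n k = 0) (n k : ℕ) :
    W n k = ∑ j ∈ range (n - k + 1), (-1) ^ j * q ^ ((k.choose 2 : ℤ) - ((k + j + 1).choose 2 : ℤ)) *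
      (∏ i ∈ Icc (k + 1) (k + j), a i) * W (n + 1) (k + j + 1) := by
  set f : ℕ → K := fun j => (-1) ^ j * q ^ ((k.choose 2 : ℤ) - ((k + j).choose 2 : ℤ)) *
    (∏ i ∈ Icc (k + 1) (k + j), a i) * W n (k + j)
  have telescope : ∀ j, (-1) ^ j * q ^ ((k.choose 2 : ℤ) - ((k + j + 1).choose 2 : ℤ)) *
      (∏ i ∈ Icc (k + 1) (k + j), a i) * W (n + 1) (k + j + 1) = f j - f (j + 1) := by
    intro j
    have hpow := zpow_sub_choose_two_succ_mul hq (k.choose 2 : ℤ) (k + j)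
    simp only [f, ← add_assoc, prod_Icc_succ_top (by omega : k + 1 ≤ k + j + 1), hW, pow_succ,
      ← hpow]
    ring
  have f_zero : f 0 = W n k := by simp [f]
  have f_end : f (n - k + 1) = 0 := by
    simp only [f, hW_zero n (k + (n - k + 1)) (by omega), mul_zero]
  rw [sum_congr rfl fun j _ => telescope j, sum_range_sub', f_zero, f_end, sub_zero]

theorem stmt6_general (q m r : ℂ) (hq0 : q ≠ 0) (n k : ℕ) :
    qW q m r n k =
      ∑ j ∈ Finset.range (n - k + 1), (-1) ^ j *
        q ^ ((k.choose 2 : ℤ) - ((k + j + 1).choose 2 : ℤ)) *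
        (∏ i ∈ Finset.Icc (k + 1) (k + j), (m * qint q i + r)) *
        qW q m r (n + 1) (k + j + 1) :=
  horizontal_recurrence hq0 (fun i => m * qint q i + r) (qW q m r) (fun _ _ => rfl)
    (fun _ _ => qW_eq_zero_of_lt q m r) n k

theorem stmt6 (q m r : ℂ) (hq0 : q ≠ 0) (hq1 : q ≠ 1)
    (hmr : ∀ i : ℕ, m * qint q i + r ≠ 0) (n k : ℕ) (hkn : k ≤ n) :
    qW q m r n k =
      ∑ j ∈ Finset.range (n - k + 1), (-1) ^ j *
        q ^ ((k.choose 2 : ℤ) - ((k + j + 1).choose 2 : ℤ)) *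
        (∏ i ∈ Finset.Icc (k + 1) (k + j), (m * qint q i + r)) *
        qW q m r (n + 1) (k + j + 1) :=
  stmt6_general q m r hq0 n k
end

section
/- For all 0 ≤ k ≤ n and complex numbers r_1, r_2 with r_1 + r_2 = r, we have w_{m,r,q}(n,k) = ∑_{j=k}^{n} C(j,k) (-r_2)^{j-k} w_{m,r_1,q}(n,j). -/
open Finset

/-! The numbers `w_{m,r,q}(n, ·)` are the coefficients of
`∏_{i<n} q^{-i} (x - m[i]_q - r)`. Replacing `r` by `r₁ + r₂` amounts to the substitution
`x ↦ x - r₂` in this polynomial, and the binomial expansion of `(x - r₂)^j` gives the formula. -/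

open Polynomial

theorem Polynomial.coeff_taylor_eq_sum_Icc {R : Type*} [CommSemiring R] (c : R) {f : R[X]}
    {N : ℕ} (hf : f.natDegree ≤ N) (k : ℕ) :
    (taylor c f).coeff k = ∑ j ∈ Icc k N, (j.choose k : R) * c ^ (j - k) * f.coeff j := by
  conv_lhs => rw [f.as_sum_range' (N + 1) (Nat.lt_succ_of_le hf)]
  simp only [map_sum, taylor_monomial, finsetSum_coeff, coeff_C_mul, coeff_X_add_C_pow]
  refine (sum_subset (fun j hj => ?_) fun j hj hjk => ?_).symm.trans (sum_congr rfl fun j _ => ?_)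
  · simp only [mem_Icc, mem_range] at hj ⊢
    omega
  · simp only [mem_Icc, mem_range, not_and, not_le] at hj hjk
    rw [Nat.choose_eq_zero_of_lt (by omega), Nat.cast_zero, mul_zero, mul_zero]
  · ring

noncomputable def qwPoly (q m r : ℂ) (n : ℕ) : ℂ[X] :=
  ∏ i ∈ range n, C (q ^ (-(i : ℤ))) * (X - C (m * qint q i + r))

theorem coeff_qwPoly (q m r : ℂ) (n k : ℕ) : (qwPoly q m r n).coeff k = qw q m r n k := by
  induction n generalizing k with
  | zero => cases k <;> simp [qwPoly, qw, coeff_one]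
  | succ n ih =>
    have hmul : qwPoly q m r (n + 1) =
        C (q ^ (-(n : ℤ))) * (qwPoly q m r n * X - C (m * qint q n + r) * qwPoly q m r n) := by
      rw [qwPoly, prod_range_succ, ← qwPoly]
      ring
    cases k with
    | zero => rw [hmul, coeff_C_mul, coeff_sub, coeff_C_mul, coeff_mul_X_zero, ih, qw]
    | succ k => rw [hmul, coeff_C_mul, coeff_sub, coeff_C_mul, coeff_mul_X, ih, ih, qw]

theorem natDegree_qwPoly_le (q m r : ℂ) (n : ℕ) : (qwPoly q m r n).natDegree ≤ n := by
  refine (natDegree_prod_le _ _).trans ?_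
  refine (sum_le_sum fun i _ => (natDegree_C_mul_le _ _).trans (natDegree_X_sub_C_le _)).trans ?_
  simp

theorem taylor_qwPoly (q m r s : ℂ) (n : ℕ) :
    taylor (-s) (qwPoly q m r n) = qwPoly q m (r + s) n := by
  change taylorAlgHom (-s) _ = _
  rw [qwPoly, map_prod]
  refine prod_congr rfl fun i _ => ?_
  change taylor (-s) _ = _
  rw [taylor_mul, taylor_C, map_sub, taylor_X, taylor_C, C_neg, ← add_assoc, C_add (a := _ + r)]
  ring

theorem stmt11_general (q m r r₁ r₂ : ℂ) (hr : r = r₁ + r₂)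
    (n k : ℕ) :
    qw q m r n k =
      ∑ j ∈ Finset.Icc k n, (j.choose k : ℂ) * (-r₂) ^ (j - k) * qw q m r₁ n j := by
  rw [hr, ← coeff_qwPoly, ← taylor_qwPoly,
    coeff_taylor_eq_sum_Icc _ (natDegree_qwPoly_le q m r₁ n)]
  simp only [coeff_qwPoly]

theorem stmt11 (q m r r₁ r₂ : ℂ) (hq0 : q ≠ 0) (hq1 : q ≠ 1) (hr : r = r₁ + r₂)
    (n k : ℕ) (hkn : k ≤ n) :
    qw q m r n k =
      ∑ j ∈ Finset.Icc k n, (j.choose k : ℂ) * (-r₂) ^ (j - k) * qw q m r₁ n j :=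
  stmt11_general q m r r₁ r₂ hr n k
end
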